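/- Put s(τ) = (Ξ − 2ξ)/(q(1 − τ)). For every τ in the open interval ((q−2)/(q−1), 1) and every real Ω ≥ 0, one has 2^(Ω−3) ≤ Π(τ, λ(s(τ) + Ω)). -/

import Mathlib

open scoped Classical ENNReal
open Real Set Filter

/-- The quadratic function `Q(s) = q·s²`. -/
noncomputable def Qf (q : ℤ) (s : ℝ) : ℝ := (q : ℝ) * s ^ 2

/-- The half-open interval `I_s = [2^(Q(s)), 2^(Q(s)) + Q(s+1) − Q(s) + Ξ)`. -/
noncomputable def Iset (q Ξ : ℤ) (s : ℝ) : Set ℝ :=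
  Set.Ico ((2 : ℝ) ^ (Qf q s)) ((2 : ℝ) ^ (Qf q s) + Qf q (s + 1) - Qf q s + (Ξ : ℝ))

/-- The half-open interval `J_s = [2^(Q(s)) + Q(s+1) − Q(s) + Ξ, 2^(Q(s+1)))`. -/
noncomputable def Jset (q Ξ : ℤ) (s : ℝ) : Set ℝ :=
  Set.Ico ((2 : ℝ) ^ (Qf q s) + Qf q (s + 1) - Qf q s + (Ξ : ℝ)) ((2 : ℝ) ^ (Qf q (s + 1)))

/-- The sequence `(x_j)` in `{0,1}`: `x_j = 0` iff `j + 1 ∈ I_s` for some integer `s ≥ 0`. -/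
noncomputable def xseq (q Ξ : ℤ) (j : ℕ) : ℕ :=
  if ∃ s : ℕ, ((j : ℝ) + 1) ∈ Iset q Ξ (s : ℝ) then 0 else 1

/-- `N(k) = #{ j ∈ {0,…,k−1} : x_j = 0 }`, with `N(0) = 0`. -/
noncomputable def Nf (q Ξ : ℤ) (k : ℕ) : ℕ :=
  ((Finset.range k).filter (fun j => xseq q Ξ j = 0)).card

/-- `B(0) = 0`, `B(1) = 1`, and for `k ≥ 2`,
`B(k) = 1 + #{ j ∈ {0,…,k−2} : x_j ≠ x_{j+1} }`. -/
noncomputable def Bf (q Ξ : ℤ) (k : ℕ) : ℕ :=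
  if k = 0 then 0
  else 1 + ((Finset.range (k - 1)).filter (fun j => xseq q Ξ j ≠ xseq q Ξ (j + 1))).card

/-- The length `|J_s| = 2^(Q(s+1)) − 2^(Q(s)) − (Q(s+1) − Q(s) + Ξ)` of `J_s`. -/
noncomputable def Jlen (q Ξ : ℤ) (s : ℝ) : ℝ :=
  (2 : ℝ) ^ (Qf q (s + 1)) - (2 : ℝ) ^ (Qf q s) - (Qf q (s + 1) - Qf q s + (Ξ : ℝ))

/-- `λ(s) = 1/|J_s|`. -/
noncomputable def lamf (q Ξ : ℤ) (s : ℝ) : ℝ := 1 / Jlen q Ξ s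

/-- The two-variable series `Π(τ,λ) = Σ_{k≥0} 2^(−λk − τ·N(k) + τ·ξ·B(k))`, a sum in `[0,∞]`. -/
noncomputable def Pi2 (q Ξ : ℤ) (ξ τ lam : ℝ) : ℝ≥0∞ :=
  ∑' k : ℕ, ENNReal.ofReal
    ((2 : ℝ) ^ (-lam * (k : ℝ) - τ * (Nf q Ξ k : ℝ) + τ * ξ * (Bf q Ξ k : ℝ)))

/-!
The zeros of `x` are exactly the blocks `I_s`, so along the gap `J_{s₀}` the counts are frozen at
`N = Q(s₀+1) + (s₀+1)Ξ` and `B = 2(s₀+1)`. The gap has at least `2^(Q(s₀+1) - 1)` points, and for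
`s₀ = ⌊s(τ) + Ω⌋` the weight `2^(-λk)` stays above `1/4` on it. Hence `Π` is at least
`2^((1-τ)qn² - τ(Ξ-2ξ)n - 3)` with `n = s₀ + 1 ≥ s(τ) + Ω`, and this quadratic in `n` is
nonnegative at `s(τ)` and has slope at least `1` beyond it.
-/

def switchAt (Z : ℕ → Prop) (j : ℕ) : Prop := ¬(Z j ↔ Z (j + 1))

section Runs

variable {Z : ℕ → Prop} [DecidablePred Z]

instance : DecidablePred (switchAt Z) := fun j => inferInstanceAs (Decidable ¬(Z j ↔ Z (j + 1)))

lemma count_switchAt_eq_of_const {a m : ℕ} (ham : a ≤ m)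
    (hconst : ∀ j, a ≤ j → j ≤ m → (Z j ↔ Z a)) :
    Nat.count (switchAt Z) m = Nat.count (switchAt Z) a := by
  obtain ⟨n, rfl⟩ := Nat.exists_eq_add_of_le ham
  rw [Nat.count_add, add_eq_left, Nat.count_iff_forall_not]
  intro i hi
  rw [switchAt, not_not, hconst (a + i) (by omega) (by omega),
    hconst (a + i + 1) (by omega) (by omega)]

lemma count_switchAt_eq_succ_of_const {a b : ℕ} (hab : a < b)
    (hconst : ∀ j, a ≤ j → j < b → (Z j ↔ Z a)) (hend : ¬(Z b ↔ Z a)) :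
    Nat.count (switchAt Z) b = Nat.count (switchAt Z) a + 1 := by
  obtain ⟨m, rfl⟩ := Nat.exists_eq_add_of_lt hab
  have hswitch : switchAt Z (a + m) := by
    rw [switchAt, hconst _ (by omega) (by omega)]
    exact fun h => hend h.symm
  rw [Nat.count_succ, if_pos hswitch,
    count_switchAt_eq_of_const (by omega) fun j h1 h2 => hconst j h1 (by omega)]

end Runs

structure IsBlockPattern (Z : ℕ → Prop) (e ℓ : ℕ → ℕ) : Prop where
  start_zero : e 0 = 0
  length_pos : ∀ s, 0 < ℓ s
  end_lt_next : ∀ s, e s + ℓ s < e (s + 1)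
  mem_iff : ∀ j, Z j ↔ ∃ s, e s ≤ j ∧ j < e s + ℓ s

namespace IsBlockPattern

variable {Z : ℕ → Prop} {e ℓ : ℕ → ℕ}

lemma monotone_start (h : IsBlockPattern Z e ℓ) : Monotone e :=
  monotone_nat_of_le_succ fun s => by have := h.end_lt_next s; omega

lemma monotone_end (h : IsBlockPattern Z e ℓ) : Monotone fun s => e s + ℓ s :=
  monotone_nat_of_le_succ fun s => by have := h.end_lt_next s; omega

lemma mem_of_mem_block (h : IsBlockPattern Z e ℓ) {s j : ℕ} (h1 : e s ≤ j)
    (h2 : j < e s + ℓ s) : Z j :=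
  (h.mem_iff j).2 ⟨s, h1, h2⟩

lemma not_mem_of_mem_gap (h : IsBlockPattern Z e ℓ) {s j : ℕ} (h1 : e s + ℓ s ≤ j)
    (h2 : j < e (s + 1)) : ¬Z j := by
  rintro hj
  obtain ⟨t, ht1, ht2⟩ := (h.mem_iff j).1 hj
  rcases le_or_gt t s with hts | hts
  · have : e t + ℓ t ≤ e s + ℓ s := h.monotone_end hts
    omega
  · have : e (s + 1) ≤ e t := h.monotone_start hts
    omega

lemma count_end [DecidablePred Z] (h : IsBlockPattern Z e ℓ) (s : ℕ) :
    Nat.count Z (e s + ℓ s) = Nat.count Z (e s) + ℓ s := by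
  rw [Nat.count_add, add_right_inj, Nat.count_iff_forall]
  exact fun i hi => h.mem_of_mem_block (s := s) (by omega) (by omega)

lemma count_eq_count_end [DecidablePred Z] (h : IsBlockPattern Z e ℓ) {s k : ℕ}
    (hk1 : e s + ℓ s ≤ k) (hk2 : k ≤ e (s + 1)) : Nat.count Z k = Nat.count Z (e s + ℓ s) := by
  obtain ⟨n, rfl⟩ := Nat.exists_eq_add_of_le hk1
  rw [Nat.count_add, add_eq_left, Nat.count_iff_forall_not]
  exact fun i hi => h.not_mem_of_mem_gap (s := s) (by omega) (by omega)

lemma count_start [DecidablePred Z] (h : IsBlockPattern Z e ℓ) (s : ℕ) :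
    Nat.count Z (e s) = ∑ t ∈ Finset.range s, ℓ t := by
  induction s with
  | zero => rw [h.start_zero, Nat.count_zero, Finset.sum_range_zero]
  | succ s ih =>
    rw [h.count_eq_count_end (h.end_lt_next s).le le_rfl, h.count_end, ih, Finset.sum_range_succ]

lemma count_of_mem_gap [DecidablePred Z] (h : IsBlockPattern Z e ℓ) {s k : ℕ}
    (hk1 : e s + ℓ s ≤ k) (hk2 : k ≤ e (s + 1)) :
    Nat.count Z k = ∑ t ∈ Finset.range (s + 1), ℓ t := by
  rw [h.count_eq_count_end hk1 hk2, h.count_end, h.count_start, Finset.sum_range_succ]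

lemma count_switchAt_end [DecidablePred Z] (h : IsBlockPattern Z e ℓ) (s : ℕ) :
    Nat.count (switchAt Z) (e s + ℓ s) = Nat.count (switchAt Z) (e s) + 1 := by
  have hs := h.length_pos s
  refine count_switchAt_eq_succ_of_const (by omega) (fun j h1 h2 => ?_) ?_
  · exact iff_of_true (h.mem_of_mem_block h1 h2) (h.mem_of_mem_block le_rfl (by omega))
  · exact fun hiff => h.not_mem_of_mem_gap le_rfl (h.end_lt_next s)
      (hiff.2 (h.mem_of_mem_block le_rfl (by omega)))

lemma count_switchAt_start [DecidablePred Z] (h : IsBlockPattern Z e ℓ) (s : ℕ) :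
    Nat.count (switchAt Z) (e s) = 2 * s := by
  induction s with
  | zero => rw [h.start_zero, Nat.count_zero]
  | succ s ih =>
    have hgap := h.end_lt_next s
    have hnext := h.length_pos (s + 1)
    have hstep :
        Nat.count (switchAt Z) (e (s + 1)) = Nat.count (switchAt Z) (e s + ℓ s) + 1 := by
      refine count_switchAt_eq_succ_of_const hgap (fun j h1 h2 => ?_) ?_
      · exact iff_of_false (h.not_mem_of_mem_gap h1 h2) (h.not_mem_of_mem_gap le_rfl hgap)
      · exact fun hiff => h.not_mem_of_mem_gap le_rfl hgap
          (hiff.1 (h.mem_of_mem_block le_rfl (by omega)))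
    rw [hstep, h.count_switchAt_end, ih]
    ring

lemma count_switchAt_of_mem_gap [DecidablePred Z] (h : IsBlockPattern Z e ℓ) {s m : ℕ}
    (hm1 : e s + ℓ s ≤ m) (hm2 : m < e (s + 1)) : Nat.count (switchAt Z) m = 2 * s + 1 := by
  rw [count_switchAt_eq_of_const hm1 fun j h1 h2 => iff_of_false
      (h.not_mem_of_mem_gap h1 (by omega)) (h.not_mem_of_mem_gap le_rfl (by omega)),
    h.count_switchAt_end, h.count_switchAt_start]

end IsBlockPattern

lemma one_add_half_le_two_rpow {y : ℝ} (hy : 0 ≤ y) : 1 + y / 2 ≤ (2 : ℝ) ^ y := by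
  have hlog : 1 / 2 < Real.log 2 := by linarith [Real.log_two_gt_d9]
  rw [Real.rpow_def_of_pos two_pos]
  nlinarith [Real.add_one_le_exp (Real.log 2 * y)]

lemma Qf_add_one_sub (q : ℤ) (s : ℝ) : Qf q (s + 1) - Qf q s = q * (2 * s + 1) := by
  unfold Qf; ring

lemma half_le_Jlen {q Ξ : ℤ} (hq : 0 ≤ q) (hqΞ : 1 ≤ q + Ξ)
    (hpow : (q : ℝ) + 1 + (Ξ : ℝ) ≤ (2 : ℝ) ^ ((q : ℝ) - 1)) {s : ℝ} (hs : 0 ≤ s) :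
    (2 : ℝ) ^ Qf q (s + 1) / 2 ≤ Jlen q Ξ s := by
  have hq' : (0 : ℝ) ≤ q := by exact_mod_cast hq
  have hqΞ' : (1 : ℝ) ≤ q + Ξ := by exact_mod_cast hqΞ
  have hqs : 0 ≤ (q : ℝ) * s := mul_nonneg hq' hs
  set X := (2 : ℝ) ^ Qf q s
  set Y := (2 : ℝ) ^ ((q : ℝ) - 1)
  set W := (2 : ℝ) ^ (2 * q * s)
  have hX : 1 ≤ X := Real.one_le_rpow one_le_two (mul_nonneg hq' (sq_nonneg s))
  have hsplit : (2 : ℝ) ^ Qf q (s + 1) = X * Y * W * 2 := by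
    rw [show Qf q (s + 1) = Qf q s + (q - 1) + 2 * q * s + 1 by unfold Qf; ring,
      Real.rpow_add two_pos, Real.rpow_add two_pos, Real.rpow_add two_pos, Real.rpow_one]
  have hW : 1 + q * s ≤ W := by
    have := one_add_half_le_two_rpow (y := 2 * q * s) (by positivity)
    linarith
  have hYW : (q + 1 + Ξ) * (1 + q * s) ≤ Y * W :=
    mul_le_mul hpow hW (by positivity) (by linarith)
  have hXYW : X * ((q + 1 + Ξ) * (1 + q * s)) ≤ X * (Y * W) :=
    mul_le_mul_of_nonneg_left hYW (by linarith)
  rw [Jlen, Qf_add_one_sub, hsplit]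
  nlinarith [mul_nonneg (sub_nonneg.2 hX) (by linarith : (0 : ℝ) ≤ q + Ξ - 1),
    mul_nonneg (sub_nonneg.2 hX) hqs]

/-- The index `j` of `x_j` stands for the point `j + 1`, hence the shift by one. -/
def blockStart (q : ℤ) (s : ℕ) : ℕ := 2 ^ (q.toNat * s ^ 2) - 1

def blockLength (q Ξ : ℤ) (s : ℕ) : ℕ := (q * (2 * s + 1) + Ξ).toNat

section Blocks

variable {q Ξ : ℤ}

lemma blockStart_add_one (hq : 0 ≤ q) (s : ℕ) :
    (blockStart q s : ℝ) + 1 = (2 : ℝ) ^ Qf q s := by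
  have hQf : Qf q s = ((q.toNat * s ^ 2 : ℕ) : ℝ) := by
    have : ((q.toNat : ℕ) : ℝ) = q := by exact_mod_cast Int.toNat_of_nonneg hq
    rw [Qf]; push_cast; rw [this]
  rw [blockStart, Nat.cast_sub Nat.one_le_two_pow, hQf, Real.rpow_natCast]
  push_cast
  ring

lemma blockLength_eq (hq : 0 ≤ q) (hqΞ : 0 ≤ q + Ξ) (s : ℕ) :
    (blockLength q Ξ s : ℝ) = Qf q (s + 1) - Qf q s + Ξ := by
  have hnonneg : 0 ≤ q * (2 * s + 1) + Ξ := by nlinarith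
  rw [blockLength, Qf_add_one_sub, ← Int.cast_natCast, Int.toNat_of_nonneg hnonneg]
  push_cast
  ring

lemma Jlen_natCast (hq : 0 ≤ q) (hqΞ : 0 ≤ q + Ξ) (s : ℕ) :
    Jlen q Ξ s = blockStart q (s + 1) - (blockStart q s + blockLength q Ξ s : ℝ) := by
  have h := blockStart_add_one hq (s + 1)
  push_cast at h
  rw [Jlen, blockLength_eq hq hqΞ, ← h, ← blockStart_add_one hq]
  ring

lemma sum_blockLength (hq : 0 ≤ q) (hqΞ : 0 ≤ q + Ξ) (n : ℕ) :
    ((∑ t ∈ Finset.range n, blockLength q Ξ t : ℕ) : ℝ) = Qf q n + n * Ξ := by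
  push_cast
  simp_rw [blockLength_eq hq hqΞ, add_comm _ (Ξ : ℝ)]
  rw [Finset.sum_add_distrib]
  have := Finset.sum_range_sub (fun t : ℕ => Qf q t) n
  push_cast at this
  rw [this, Finset.sum_const, Finset.card_range, nsmul_eq_mul, Qf, Qf]
  ring

lemma xseq_eq_zero_iff (hq : 0 ≤ q) (hqΞ : 0 ≤ q + Ξ) (j : ℕ) :
    xseq q Ξ j = 0 ↔ ∃ s, blockStart q s ≤ j ∧ j < blockStart q s + blockLength q Ξ s := by
  rw [xseq]
  simp only [ite_eq_left_iff, one_ne_zero, imp_false, not_not]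
  refine exists_congr fun s => ?_
  rw [Iset, Set.mem_Ico, add_sub_assoc, add_assoc, ← blockLength_eq hq hqΞ,
    ← blockStart_add_one hq]
  constructor
  · rintro ⟨h1, h2⟩
    exact ⟨by exact_mod_cast (by linarith : (blockStart q s : ℝ) ≤ j),
      by exact_mod_cast (by linarith : (j : ℝ) < blockStart q s + blockLength q Ξ s)⟩
  · rintro ⟨h1, h2⟩
    have h1' : (blockStart q s : ℝ) ≤ j := by exact_mod_cast h1
    have h2' : (j : ℝ) < blockStart q s + blockLength q Ξ s := by exact_mod_cast h2
    constructor <;> linarith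

lemma isBlockPattern_xseq (hq : 0 ≤ q) (hqΞ : 1 ≤ q + Ξ)
    (hpow : (q : ℝ) + 1 + (Ξ : ℝ) ≤ (2 : ℝ) ^ ((q : ℝ) - 1)) :
    IsBlockPattern (fun j => xseq q Ξ j = 0) (blockStart q) (blockLength q Ξ) where
  start_zero := by simp [blockStart]
  length_pos s := by
    rw [blockLength]
    have : 0 < q * (2 * s + 1) + Ξ := by nlinarith
    omega
  end_lt_next s := by
    have hJ := half_le_Jlen hq hqΞ hpow (Nat.cast_nonneg s)
    rw [Jlen_natCast hq (by omega)] at hJ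
    have : (blockStart q s + blockLength q Ξ s : ℝ) < blockStart q (s + 1) := by
      linarith [Real.rpow_pos_of_pos two_pos (Qf q (s + 1))]
    exact_mod_cast this
  mem_iff := xseq_eq_zero_iff hq (by omega)

end Blocks

lemma Nf_eq_count (q Ξ : ℤ) (k : ℕ) : Nf q Ξ k = Nat.count (fun j => xseq q Ξ j = 0) k :=
  (Nat.count_eq_card_filter_range _ _).symm

lemma Bf_eq_count_switchAt (q Ξ : ℤ) {k : ℕ} (hk : k ≠ 0) :
    Bf q Ξ k = 1 + Nat.count (switchAt fun j => xseq q Ξ j = 0) (k - 1) := by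
  rw [Bf, if_neg hk, Nat.count_eq_card_filter_range]
  congr 2
  have h01 : ∀ i, xseq q Ξ i = 0 ∨ xseq q Ξ i = 1 := fun i => by
    unfold xseq; split_ifs <;> simp
  refine Finset.filter_congr fun j _ => ?_
  rcases h01 j with h | h <;> rcases h01 (j + 1) with h' | h' <;> simp [switchAt, h, h']

/-- On the gap `J_s` the counts `N` and `B` are constant and `λ k ≤ 2`, so each of its `|J_s|`
points contributes at least the same term to `Π`. -/
lemma ofReal_Jlen_mul_le_Pi2 {q Ξ : ℤ} (hq : 0 ≤ q) (hqΞ : 1 ≤ q + Ξ)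
    (hpow : (q : ℝ) + 1 + (Ξ : ℝ) ≤ (2 : ℝ) ^ ((q : ℝ) - 1)) (ξ τ : ℝ) (s : ℕ) {lam : ℝ}
    (hlam0 : 0 ≤ lam) (hlam : lam * (2 : ℝ) ^ Qf q (s + 1) ≤ 2) :
    ENNReal.ofReal (Jlen q Ξ s *
        (2 : ℝ) ^ (-2 - τ * (Qf q (s + 1) + (Ξ - 2 * ξ) * (s + 1)))) ≤ Pi2 q Ξ ξ τ lam := by
  have hP := isBlockPattern_xseq hq hqΞ hpow
  set G := Finset.Ioc (blockStart q s + blockLength q Ξ s) (blockStart q (s + 1))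
  have hcard : (G.card : ℝ) = Jlen q Ξ s := by
    rw [Nat.card_Ioc, Nat.cast_sub (hP.end_lt_next s).le, Jlen_natCast hq (by omega)]
    push_cast
    ring
  have hterm : ∀ k ∈ G, (2 : ℝ) ^ (-2 - τ * (Qf q (s + 1) + (Ξ - 2 * ξ) * (s + 1))) ≤
      (2 : ℝ) ^ (-lam * k - τ * (Nf q Ξ k : ℝ) + τ * ξ * (Bf q Ξ k : ℝ)) := by
    intro k hk
    obtain ⟨hk1, hk2⟩ := Finset.mem_Ioc.1 hk
    have hN : (Nf q Ξ k : ℝ) = Qf q (s + 1) + (s + 1) * Ξ := by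
      rw [Nf_eq_count, hP.count_of_mem_gap hk1.le hk2, sum_blockLength hq (by omega)]
      push_cast
      ring
    have hB : Bf q Ξ k = 2 * (s + 1) := by
      rw [Bf_eq_count_switchAt q Ξ (by omega),
        hP.count_switchAt_of_mem_gap (s := s) (by omega) (by omega)]
      omega
    have hk : lam * k ≤ 2 := by
      have hkE : (k : ℝ) + 1 ≤ (2 : ℝ) ^ Qf q (s + 1) := by
        have := blockStart_add_one hq (s + 1)
        push_cast at this
        rw [← this]
        exact_mod_cast Nat.succ_le_succ hk2
      nlinarith
    apply Real.rpow_le_rpow_of_exponent_le one_le_two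
    rw [hN, hB]
    push_cast
    nlinarith
  calc ENNReal.ofReal (Jlen q Ξ s * (2 : ℝ) ^ (-2 - τ * (Qf q (s + 1) + (Ξ - 2 * ξ) * (s + 1))))
      = ENNReal.ofReal
          (∑ _k ∈ G, (2 : ℝ) ^ (-2 - τ * (Qf q (s + 1) + (Ξ - 2 * ξ) * (s + 1)))) := by
        rw [Finset.sum_const, nsmul_eq_mul, hcard]
    _ ≤ ENNReal.ofReal (∑ k ∈ G,
          (2 : ℝ) ^ (-lam * k - τ * (Nf q Ξ k : ℝ) + τ * ξ * (Bf q Ξ k : ℝ))) :=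
        ENNReal.ofReal_le_ofReal (Finset.sum_le_sum hterm)
    _ = ∑ k ∈ G,
          ENNReal.ofReal ((2 : ℝ) ^ (-lam * k - τ * (Nf q Ξ k : ℝ) + τ * ξ * (Bf q Ξ k : ℝ))) :=
        ENNReal.ofReal_sum_of_nonneg fun k _ => (Real.rpow_pos_of_pos two_pos _).le
    _ ≤ Pi2 q Ξ ξ τ lam := ENNReal.sum_le_tsum _

lemma lamf_mul_two_rpow_le {q Ξ : ℤ} (hq : 0 ≤ q) (hqΞ : 1 ≤ q + Ξ)
    (hpow : (q : ℝ) + 1 + (Ξ : ℝ) ≤ (2 : ℝ) ^ ((q : ℝ) - 1)) {s t : ℝ} (hs : 0 ≤ s)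
    (ht : 0 ≤ t) (hts : t ≤ s + 1) : lamf q Ξ s * (2 : ℝ) ^ Qf q t ≤ 2 := by
  have hJ := half_le_Jlen hq hqΞ hpow hs
  have hQ : (2 : ℝ) ^ Qf q t ≤ (2 : ℝ) ^ Qf q (s + 1) :=
    Real.rpow_le_rpow_of_exponent_le one_le_two
      (mul_le_mul_of_nonneg_left (pow_le_pow_left₀ ht hts 2) (by exact_mod_cast hq))
  have hpos := Real.rpow_pos_of_pos two_pos (Qf q t)
  rw [lamf, one_div_mul_eq_div, div_le_iff₀ (by linarith)]
  linarith

/-- At `a = γ / (q (1 - τ))` the quadratic equals `(1 - τ) γ a ≥ 0` and its slope is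
`γ (2 - τ) ≥ 1`. -/
lemma le_mul_sq_sub_mul_of_div_add_le {q τ γ Ω n : ℝ} (hq : 0 < q) (hτ : τ < 1) (hγ : 1 ≤ γ)
    (hΩ : 0 ≤ Ω) (hn : γ / (q * (1 - τ)) + Ω ≤ n) :
    Ω ≤ (1 - τ) * q * n ^ 2 - τ * γ * n := by
  set a := γ / (q * (1 - τ))
  have ha : 0 ≤ a := div_nonneg (by linarith) (mul_pos hq (by linarith)).le
  have hroot : (1 - τ) * q * a = γ := by
    have : 1 - τ ≠ 0 := by linarith
    simp only [a]
    field_simp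
  obtain ⟨δ, hδ, rfl⟩ : ∃ δ, 0 ≤ δ ∧ n = a + Ω + δ := ⟨n - (a + Ω), by linarith, by ring⟩
  have hid : (1 - τ) * q * (a + Ω + δ) ^ 2 - τ * γ * (a + Ω + δ) - Ω
      = γ * a * (1 - τ) + Ω * (γ * (2 - τ) - 1) + γ * δ * (2 - τ) + (1 - τ) * q * (Ω + δ) ^ 2 := by
    linear_combination (a + 2 * (Ω + δ)) * hroot
  have hslope : 1 ≤ γ * (2 - τ) := by nlinarith
  linarith [mul_nonneg (mul_nonneg (by linarith : 0 ≤ γ) ha) (by linarith : 0 ≤ 1 - τ),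
    mul_nonneg hΩ (sub_nonneg.2 hslope),
    mul_nonneg (mul_nonneg (by linarith : 0 ≤ γ) hδ) (by linarith : 0 ≤ 2 - τ),
    mul_nonneg (mul_pos (sub_pos.2 hτ) hq).le (sq_nonneg (Ω + δ))]

theorem stmt8_general (Ξ q : ℤ) (hq : 3 ≤ q) (hqΞ : 1 ≤ q + Ξ)
    (hpow : (q : ℝ) + 1 + (Ξ : ℝ) ≤ (2 : ℝ) ^ ((q : ℝ) - 1))
    (ξ : ℝ) (hξ1 : 1 ≤ (Ξ : ℝ) - 2 * ξ) :
    ∀ τ : ℝ, ((q : ℝ) - 2) / ((q : ℝ) - 1) < τ → τ < 1 → ∀ Ω : ℝ, 0 ≤ Ω →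
      ENNReal.ofReal ((2 : ℝ) ^ (Ω - 3)) ≤
        Pi2 q Ξ ξ τ (lamf q Ξ (((Ξ : ℝ) - 2 * ξ) / ((q : ℝ) * (1 - τ)) + Ω)) := by
  intro τ _ hτ Ω hΩ
  have hq0 : 0 ≤ q := by omega
  have hqpos : (0 : ℝ) < q := by exact_mod_cast (by omega : 0 < q)
  set s := ((Ξ : ℝ) - 2 * ξ) / ((q : ℝ) * (1 - τ)) + Ω
  have hs : 0 ≤ s := add_nonneg (div_nonneg (by linarith) (mul_pos hqpos (by linarith)).le) hΩ
  set n := ⌊s⌋₊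
  have hn : s < n + 1 := Nat.lt_floor_add_one s
  have hlam0 : 0 ≤ lamf q Ξ s := by
    have := half_le_Jlen hq0 hqΞ hpow hs
    rw [lamf]
    exact one_div_nonneg.2 (le_trans (by positivity) this)
  have hlam := lamf_mul_two_rpow_le hq0 hqΞ hpow hs (t := n + 1) (by positivity)
    (by linarith [Nat.floor_le hs])
  refine le_trans (ENNReal.ofReal_le_ofReal ?_)
    (ofReal_Jlen_mul_le_Pi2 hq0 hqΞ hpow ξ τ n hlam0 hlam)
  have hexcess := le_mul_sq_sub_mul_of_div_add_le hqpos hτ hξ1 hΩ hn.le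
  calc (2 : ℝ) ^ (Ω - 3)
      ≤ (2 : ℝ) ^ (Qf q (n + 1) - 1 + (-2 - τ * (Qf q (n + 1) + (Ξ - 2 * ξ) * (n + 1)))) := by
        apply Real.rpow_le_rpow_of_exponent_le one_le_two
        simp only [Qf]
        linarith
    _ = (2 : ℝ) ^ Qf q (n + 1) / 2 *
          (2 : ℝ) ^ (-2 - τ * (Qf q (n + 1) + (Ξ - 2 * ξ) * (n + 1))) := by
        rw [Real.rpow_add two_pos, Real.rpow_sub two_pos, Real.rpow_one]
    _ ≤ Jlen q Ξ n * (2 : ℝ) ^ (-2 - τ * (Qf q (n + 1) + (Ξ - 2 * ξ) * (n + 1))) :=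
        mul_le_mul_of_nonneg_right (half_le_Jlen hq0 hqΞ hpow (Nat.cast_nonneg n)) (by positivity)

theorem stmt8 (Ξ q : ℤ) (hq : 3 ≤ q) (hqΞ : 1 ≤ q + Ξ)
    (hpow : (q : ℝ) + 1 + (Ξ : ℝ) ≤ (2 : ℝ) ^ ((q : ℝ) - 1))
    (ξ : ℝ) (hξ1 : 1 ≤ (Ξ : ℝ) - 2 * ξ) (hξ2 : (Ξ : ℝ) - 2 * ξ ≤ 2) :
    ∀ τ : ℝ, ((q : ℝ) - 2) / ((q : ℝ) - 1) < τ → τ < 1 → ∀ Ω : ℝ, 0 ≤ Ω →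
      ENNReal.ofReal ((2 : ℝ) ^ (Ω - 3)) ≤
        Pi2 q Ξ ξ τ (lamf q Ξ (((Ξ : ℝ) - 2 * ξ) / ((q : ℝ) * (1 - τ)) + Ω)) :=
  stmt8_general Ξ q hq hqΞ hpow ξ hξ1
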